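/- arXiv:2509.05894 — 5 statements merged into one kernel-verified Lean document; each statement's English description precedes it below -/
import Mathlib

section
/- Let n ≥ 1, let S ⊆ ℤ^n be a finite nonempty set, and let P = convexHull ℝ S ⊆ ℝ^n have nonempty interior (i.e. dim P = n). Then the limit as m → ∞ (m ranging over positive natural numbers) of #((m·P) ∩ ℤ^n) / m^n exists and equals the Lebesgue measure of P. Equivalently, the mixed volume Vol(P) := n!·(Euclidean volume of P) satisfies Vol(P) = n!·lim_{m→∞} #((m·P) ∩ ℤ^n)/m^n. -/
open MeasureTheory Pointwise Filter Topology Bornology Submodule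

/-!
A convex set has Lebesgue-null frontier, and the convex hull of finitely many points is compact, so
`P` is Jordan measurable. Rescaling by `m⁻¹` identifies the lattice points of `m • P` with the points
of `P` in the lattice `m⁻¹ ℤⁿ`; their number divided by `mⁿ` is a Riemann sum of the indicator of
`P`, which converges to `volume P` (`tendsto_card_div_pow_atTop_volume`).
-/

section

variable {ι : Type*}

lemma range_inv_natCast_smul_intCast [Finite ι] (m : ℕ) [NeZero m] :
    Set.range (fun x : ι → ℤ => (m : ℝ)⁻¹ • fun i => (x i : ℝ)) =
      (m : ℝ)⁻¹ • (span ℤ (Set.range (Pi.basisFun ℝ ι)) : Set (ι → ℝ)) := by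
  have hm : (m : ℝ) ≠ 0 := NeZero.ne _
  ext v
  rw [← Submodule.coe_pointwise_smul, SetLike.mem_coe,
    BoxIntegral.unitPartition.mem_smul_span_iff]
  constructor
  · rintro ⟨x, rfl⟩ i
    exact ⟨x i, by simp [hm]⟩
  · intro hv
    choose x hx using hv
    refine ⟨x, funext fun i => ?_⟩
    simpa [hm] using congrArg ((m : ℝ)⁻¹ * ·) (hx i)

lemma ncard_intCast_mem_smul_eq_natCard_inter [Finite ι] (m : ℕ) [NeZero m]
    (s : Set (ι → ℝ)) :
    {x : ι → ℤ | (fun i => (x i : ℝ)) ∈ (m : ℝ) • s}.ncard =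
      Nat.card ↑(s ∩ (m : ℝ)⁻¹ • (span ℤ (Set.range (Pi.basisFun ℝ ι)) : Set (ι → ℝ))) := by
  have hm : (m : ℝ) ≠ 0 := NeZero.ne _
  have hinj : Function.Injective (fun x : ι → ℤ => (m : ℝ)⁻¹ • fun i => (x i : ℝ)) :=
    fun x y h => funext fun i => by simpa [hm] using congrFun h i
  simp_rw [Set.mem_smul_set_iff_inv_smul_mem₀ hm]
  rw [← range_inv_natCast_smul_intCast, ← Set.image_preimage_eq_inter_range,
    Nat.card_coe_set_eq, Set.ncard_image_of_injective _ hinj]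
  rfl

theorem tendsto_ncard_intCast_mem_smul_div_pow [Fintype ι] {s : Set (ι → ℝ)}
    (hs_bdd : IsBounded s) (hs_meas : MeasurableSet s) (hs_frontier : volume (frontier s) = 0) :
    Tendsto (fun m : ℕ =>
        ({x : ι → ℤ | (fun i => (x i : ℝ)) ∈ (m : ℝ) • s}.ncard : ℝ) / (m : ℝ) ^ Fintype.card ι)
      atTop (𝓝 (volume s).toReal) := by
  refine (tendsto_card_div_pow_atTop_volume s hs_bdd hs_meas hs_frontier).congr' ?_
  filter_upwards [eventually_ne_atTop 0] with m hm
  have : NeZero m := ⟨hm⟩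
  rw [ncard_intCast_mem_smul_eq_natCard_inter]

end

theorem stmt4_general (n : ℕ) (S : Finset (Fin n → ℤ))
    (P : Set (Fin n → ℝ))
    (hP : P = convexHull ℝ ((fun (v : Fin n → ℤ) (j : Fin n) => (v j : ℝ)) '' S)) :
    Filter.Tendsto
      (fun m : ℕ =>
        (({x : Fin n → ℤ | (fun j => (x j : ℝ)) ∈ (m : ℝ) • P}.ncard : ℝ)) / (m : ℝ) ^ n)
      Filter.atTop (nhds (volume P).toReal) := by
  have hP_convex : Convex ℝ P := hP ▸ convex_convexHull ℝ _
  have hP_compact : IsCompact P := hP ▸ (S.finite_toSet.image _).isCompact_convexHull ℝ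
  simpa using tendsto_ncard_intCast_mem_smul_div_pow hP_compact.isBounded
    hP_compact.isClosed.measurableSet (hP_convex.addHaar_frontier volume)

/-- Ehrhart-type limit: for a full-dimensional lattice polytope
`P = conv(S) ⊆ ℝ^n`, the number of lattice points in the dilate `m·P`, divided
by `m^n`, converges as `m → ∞` to the Lebesgue (Euclidean) volume of `P`.
Equivalently, `Vol(P) = n! · lim_m #((m·P) ∩ ℤ^n)/m^n` where `Vol` is the mixed
volume (`n!` times Euclidean volume). -/
theorem stmt4 (n : ℕ) (hn : 1 ≤ n) (S : Finset (Fin n → ℤ)) (hS : S.Nonempty)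
    (P : Set (Fin n → ℝ))
    (hP : P = convexHull ℝ ((fun (v : Fin n → ℤ) (j : Fin n) => (v j : ℝ)) '' S))
    (hfull : (interior P).Nonempty) :
    Filter.Tendsto
      (fun m : ℕ =>
        (({x : Fin n → ℤ | (fun j => (x j : ℝ)) ∈ (m : ℝ) • P}.ncard : ℝ)) / (m : ℝ) ^ n)
      Filter.atTop (nhds (volume P).toReal) :=
  stmt4_general n S P hP
end

section
/- Let n ≥ 1 and let u_1,…,u_r ∈ ℤ^n (r ≥ 1) be such that the polytope Newt(f) = convexHull ℝ {u_1,…,u_r} has nonempty interior in ℝ^n, and define f : ℝ^n → ℝ by f(x) = max_{1 ≤ i ≤ r} ⟨u_i,x⟩. Then the limit as m → ∞ (m over positive naturals) of (1/m^n)·#{w ∈ ℤ^n : ⟨w,x⟩ ≤ m·f(x) for all x ∈ ℝ^n} exists and equals the Lebesgue measure of Newt(f). (This is the identity Vol(Newt(f)) = Vol(𝒪(−D)) expressed via lattice-point counts of global sections, since the lattice points of the polytope of −mD are exactly the w ∈ ℤ^n with ⟨w,·⟩ ≤ m·f.) -/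
/-!
By Hahn–Banach, `⟨w, ·⟩ ≤ m f` holds iff `w ∈ m • Newt(f)`, since `f` is the support function of
`Newt(f)`. So the count is that of the lattice points of `m • Newt(f)`, and a convex body has a
null frontier, so the classical Riemann-sum asymptotic `tendsto_card_div_pow_atTop_volume`
applies.
-/

open MeasureTheory Set Filter Topology Pointwise

section SupportFunction

variable {ι ι' : Type*} [Fintype ι] {p : ι' → ι → ℝ}

theorem dotProduct_le_of_mem_convexHull {v x : ι → ℝ} {b : ℝ} (hb : ∀ i, p i ⬝ᵥ x ≤ b)
    (hv : v ∈ convexHull ℝ (range p)) : v ⬝ᵥ x ≤ b := by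
  have hsub : convexHull ℝ (range p) ⊆ {w | w ⬝ᵥ x ≤ b} :=
    convexHull_min (range_subset_iff.mpr hb) (convex_halfSpace_le
      ⟨fun a c => add_dotProduct a c x, fun t a => smul_dotProduct t a x⟩ b)
  exact hsub hv

theorem mem_convexHull_iff_forall_dotProduct_le (hp : IsClosed (convexHull ℝ (range p)))
    {g : (ι → ℝ) → ℝ} (hg : ∀ x, IsLUB (range fun i => p i ⬝ᵥ x) (g x)) {v : ι → ℝ} :
    v ∈ convexHull ℝ (range p) ↔ ∀ x, v ⬝ᵥ x ≤ g x := by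
  classical
  refine ⟨fun hv x => dotProduct_le_of_mem_convexHull (fun i => (hg x).1 ⟨i, rfl⟩) hv,
    fun h => by_contra fun hv => ?_⟩
  obtain ⟨φ, t, hφt, htφ⟩ := geometric_hahn_banach_closed_point (convex_convexHull ℝ _) hp hv
  set y : ι → ℝ := fun j => φ fun k => if j = k then 1 else 0
  have hφ : ∀ q, φ q = q ⬝ᵥ y := fun q => by
    rw [← ContinuousLinearMap.coe_coe, LinearMap.pi_apply_eq_sum_univ]
    simp [dotProduct, y]
  have hgt : g y ≤ t := (hg y).2 <| by
    rintro _ ⟨i, rfl⟩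
    exact (hφ (p i) ▸ hφt _ (subset_convexHull ℝ _ ⟨i, rfl⟩)).le
  linarith [h y, hφ v]

theorem mem_smul_convexHull_iff_forall_dotProduct_le (hp : IsClosed (convexHull ℝ (range p)))
    {g : (ι → ℝ) → ℝ} (hg : ∀ x, IsLUB (range fun i => p i ⬝ᵥ x) (g x)) {c : ℝ} (hc : 0 < c)
    {v : ι → ℝ} : v ∈ c • convexHull ℝ (range p) ↔ ∀ x, v ⬝ᵥ x ≤ c * g x := by
  rw [mem_smul_set_iff_inv_smul_mem₀ hc.ne', mem_convexHull_iff_forall_dotProduct_le hp hg]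
  simp_rw [smul_dotProduct, smul_eq_mul, inv_mul_le_iff₀ hc]

end SupportFunction

section LatticePoints

variable {ι : Type*} [Fintype ι]

theorem coe_span_int_range_basisFun :
    (Submodule.span ℤ (range (Pi.basisFun ℝ ι)) : Set (ι → ℝ)) =
      range fun (w : ι → ℤ) j => (w j : ℝ) := by
  ext v
  rw [SetLike.mem_coe, Module.Basis.mem_span_iff_repr_mem]
  simp only [Pi.basisFun_repr, algebraMap_int_eq, eq_intCast, mem_range, funext_iff]
  exact ⟨fun h => ⟨fun j => (h j).choose, fun j => (h j).choose_spec⟩,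
    fun ⟨w, hw⟩ j => ⟨w j, hw j⟩⟩

theorem ncard_setOf_intCast_mem_smul {c : ℝ} (hc : c ≠ 0) (s : Set (ι → ℝ)) :
    {w : ι → ℤ | (fun j => (w j : ℝ)) ∈ c • s}.ncard =
      Nat.card (s ∩ c⁻¹ • Submodule.span ℤ (range (Pi.basisFun ℝ ι)) : Set (ι → ℝ)) := by
  have hinj : Function.Injective fun (w : ι → ℤ) => c⁻¹ • fun j => (w j : ℝ) := fun a b hab => by
    funext j
    exact_mod_cast congr_fun (smul_right_injective _ (inv_ne_zero hc) hab) j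
  rw [← ncard_image_of_injective _ hinj, ← Nat.card_coe_set_eq, coe_span_int_range_basisFun]
  congr 2
  ext x
  simp only [mem_image, mem_ofPred_eq, mem_inter_iff, mem_inv_smul_set_iff₀ hc, mem_range]
  constructor
  · rintro ⟨w, hw, rfl⟩
    exact ⟨(mem_smul_set_iff_inv_smul_mem₀ hc _ _).mp hw, w, (smul_inv_smul₀ hc _).symm⟩
  · rintro ⟨hx, w, hw⟩
    exact ⟨w, hw ▸ smul_mem_smul_set hx, by rw [hw, inv_smul_smul₀ hc]⟩

theorem tendsto_ncard_setOf_intCast_mem_smul_div_pow {s : Set (ι → ℝ)}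
    (hs₁ : Bornology.IsBounded s) (hs₂ : MeasurableSet s) (hs₃ : volume (frontier s) = 0) :
    Tendsto (fun m : ℕ =>
        ({w : ι → ℤ | (fun j => (w j : ℝ)) ∈ (m : ℝ) • s}.ncard : ℝ) / (m : ℝ) ^ Fintype.card ι)
      atTop (𝓝 (volume.real s)) := by
  refine (tendsto_card_div_pow_atTop_volume s hs₁ hs₂ hs₃).congr' ?_
  filter_upwards [eventually_gt_atTop 0] with m hm
  rw [ncard_setOf_intCast_mem_smul (by positivity)]

end LatticePoints

theorem stmt5_general (n r : ℕ)
    (u : Fin r → Fin n → ℤ) (f : (Fin n → ℝ) → ℝ)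
    (hf : ∀ x : Fin n → ℝ,
      IsGreatest (Set.range fun i : Fin r => ∑ j, (u i j : ℝ) * x j) (f x)) :
    Filter.Tendsto
      (fun m : ℕ =>
        (({w : Fin n → ℤ | ∀ x : Fin n → ℝ,
          (∑ j, (w j : ℝ) * x j) ≤ (m : ℝ) * f x}.ncard : ℝ)) / (m : ℝ) ^ n)
      Filter.atTop
      (nhds (volume (convexHull ℝ
        (Set.range fun (i : Fin r) (j : Fin n) => (u i j : ℝ)))).toReal) := by
  set P := convexHull ℝ (range fun (i : Fin r) (j : Fin n) => (u i j : ℝ))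
  have hP : IsCompact P := (finite_range _).isCompact_convexHull ℝ
  have hsections : ∀ m : ℕ, 0 < m →
      {w : Fin n → ℤ | ∀ x : Fin n → ℝ, (∑ j, (w j : ℝ) * x j) ≤ (m : ℝ) * f x} =
        {w | (fun j => (w j : ℝ)) ∈ (m : ℝ) • P} := fun m hm => by
    ext w
    exact (mem_smul_convexHull_iff_forall_dotProduct_le hP.isClosed (fun x => (hf x).isLUB)
      (Nat.cast_pos.mpr hm)).symm
  have hlim := tendsto_ncard_setOf_intCast_mem_smul_div_pow hP.isBounded
    hP.isClosed.measurableSet ((convex_convexHull ℝ _).addHaar_frontier volume)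
  rw [Fintype.card_fin] at hlim
  refine hlim.congr' ?_
  filter_upwards [eventually_gt_atTop 0] with m hm
  rw [hsections m hm]

/-- For a tropical polynomial `f(x) = max_i ⟨u_i,x⟩` whose Newton polytope
`Newt(f) = conv(u_1,…,u_r)` is full-dimensional, the number of lattice points
`w ∈ ℤ^n` with `⟨w,·⟩ ≤ m·f` (the global sections of `𝒪(-mD)`), divided by
`m^n`, tends to the Euclidean volume of `Newt(f)`; i.e.
`Vol(Newt(f)) = Vol(𝒪(-D))`. -/
theorem stmt5 (n r : ℕ) (hn : 1 ≤ n) (hr : 1 ≤ r)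
    (u : Fin r → Fin n → ℤ) (f : (Fin n → ℝ) → ℝ)
    (hf : ∀ x : Fin n → ℝ,
      IsGreatest (Set.range fun i : Fin r => ∑ j, (u i j : ℝ) * x j) (f x))
    (hfull : (interior (convexHull ℝ
      (Set.range fun (i : Fin r) (j : Fin n) => (u i j : ℝ)))).Nonempty) :
    Filter.Tendsto
      (fun m : ℕ =>
        (({w : Fin n → ℤ | ∀ x : Fin n → ℝ,
          (∑ j, (w j : ℝ) * x j) ≤ (m : ℝ) * f x}.ncard : ℝ)) / (m : ℝ) ^ n)
      Filter.atTop
      (nhds (volume (convexHull ℝ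
        (Set.range fun (i : Fin r) (j : Fin n) => (u i j : ℝ)))).toReal) :=
  stmt5_general n r u f hf
end

section
/- Let n ≥ 1, p ≥ 1, let a_1,…,a_p ∈ ℤ^n be primitive vectors that are pairwise distinct, let b_1,…,b_p ∈ ℚ, and define f : ℝ^n → ℝ by f(x) = Σ_{j=1}^p b_j·max(0, ⟨a_j,x⟩). Fix i ∈ {1,…,p} and set c_i = Σ_{j : a_j = a_i or a_j = −a_i} b_j. Then for every x ∈ ℝ^n with ⟨a_i,x⟩ = 0 and ⟨a_j,x⟩ ≠ 0 for every j such that a_j ∉ {a_i, −a_i}, and for every v ∈ ℝ^n, there exists ε > 0 such that for all 0 < t < ε: f(x+tv) + f(x−tv) − 2·f(x) = c_i·t·|⟨a_i,v⟩|. In particular, this jump of f across the hyperplane {y : ⟨a_i,y⟩ = 0} is the same at every such point x (this is the constancy of the intersection number D_f·V(τ) over all walls τ contained in a fixed hyperplane of the reduced representation). -/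
/-- A vector `a ∈ ℤ^n` is primitive if it is nonzero and the gcd of its
coordinates is `1`. -/
def Primitive {n : ℕ} (a : Fin n → ℤ) : Prop :=
  a ≠ 0 ∧ Finset.univ.gcd a = 1

lemma max_zero_add_max_zero_neg (y : ℝ) : max 0 y + max 0 (-y) = |y| := by
  rcases le_total 0 y with h | h
  · rw [max_eq_right h, max_eq_left (by linarith), abs_of_nonneg h]; ring
  · rw [max_eq_left h, max_eq_right (by linarith), abs_of_nonpos h]; ring

/-- For a reduced representation `f(x) = Σ_j b_j · max(0,⟨a_j,x⟩)` of an
unbiased shallow ReLU network (the `a_j` primitive and pairwise distinct), the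
second-difference jump of `f` across the hyperplane `⟨a_i,·⟩ = 0` at any point
of a wall (a point lying on no other hyperplane of the arrangement) equals
`c_i · t · |⟨a_i,v⟩|`, where `c_i = Σ_{j : a_j = ±a_i} b_j`; in particular it is
the same at every such point. -/
theorem stmt6 (n p : ℕ) (hn : 1 ≤ n) (hp : 1 ≤ p)
    (a : Fin p → Fin n → ℤ) (ha : ∀ j, Primitive (a j))
    (hdist : Function.Injective a)
    (b : Fin p → ℚ) (f : (Fin n → ℝ) → ℝ)
    (hf : ∀ x : Fin n → ℝ,
      f x = ∑ j, (b j : ℝ) * max 0 (∑ k, (a j k : ℝ) * x k))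
    (i : Fin p) (c : ℚ)
    (hc : c = ∑ j ∈ Finset.univ.filter (fun j => a j = a i ∨ a j = -a i), b j)
    (x : Fin n → ℝ)
    (hx1 : (∑ k, (a i k : ℝ) * x k) = 0)
    (hx2 : ∀ j, a j ≠ a i → a j ≠ -a i → (∑ k, (a j k : ℝ) * x k) ≠ 0)
    (v : Fin n → ℝ) :
    ∃ ε > 0, ∀ t : ℝ, 0 < t → t < ε →
      f (x + t • v) + f (x - t • v) - 2 * f x
        = (c : ℝ) * t * |∑ k, (a i k : ℝ) * v k| := by
  have hne : (Finset.univ : Finset (Fin p)).Nonempty := ⟨⟨0, hp⟩, Finset.mem_univ _⟩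
  set r : Fin p → ℝ := fun j => ∑ k, (a j k : ℝ) * x k with hr
  set s : Fin p → ℝ := fun j => ∑ k, (a j k : ℝ) * v k with hs
  have expand₁ : ∀ (j : Fin p) (t : ℝ),
      (∑ k, (a j k : ℝ) * (x + t • v) k) = r j + t * s j := by
    intro j t
    simp only [Pi.add_apply, Pi.smul_apply, smul_eq_mul, hr, hs, Finset.mul_sum]
    rw [← Finset.sum_add_distrib]
    exact Finset.sum_congr rfl fun k _ => by ring
  have expand₂ : ∀ (j : Fin p) (t : ℝ),
      (∑ k, (a j k : ℝ) * (x - t • v) k) = r j - t * s j := by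
    intro j t
    simp only [Pi.sub_apply, Pi.smul_apply, smul_eq_mul, hr, hs, Finset.mul_sum]
    rw [← Finset.sum_sub_distrib]
    exact Finset.sum_congr rfl fun k _ => by ring
  -- values on the filter set
  have hrS : ∀ j, (a j = a i ∨ a j = -a i) → r j = 0 := by
    intro j hj
    rcases hj with hj | hj
    · simp only [hr, hj]; exact hx1
    · simp only [hr, hj]
      have : ∀ k, ((-a i) k : ℝ) * x k = -((a i k : ℝ) * x k) := by
        intro k; push_cast [Pi.neg_apply]; ring
      rw [Finset.sum_congr rfl fun k _ => this k, Finset.sum_neg_distrib, hx1, neg_zero]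
  have hsS : ∀ j, (a j = a i ∨ a j = -a i) → |s j| = |s i| := by
    intro j hj
    rcases hj with hj | hj
    · simp [hs, hj]
    · have : s j = -s i := by
        simp only [hs, hj]
        rw [← Finset.sum_neg_distrib]
        exact Finset.sum_congr rfl fun k _ => by push_cast [Pi.neg_apply]; ring
      rw [this, abs_neg]
  -- choose ε
  set ε : ℝ := Finset.univ.inf' hne fun j => if r j = 0 then 1 else |r j| / (|s j| + 1) with hε
  have hεpos : 0 < ε := by
    rw [hε, Finset.lt_inf'_iff]
    intro j _
    split
    · norm_num
    · exact div_pos (abs_pos.mpr (by assumption)) (by positivity)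
  refine ⟨ε, hεpos, fun t ht htε => ?_⟩
  have hbound : ∀ j, r j ≠ 0 → t * |s j| < |r j| := by
    intro j hrj
    have h1 : ε ≤ |r j| / (|s j| + 1) := by
      have h0 := Finset.inf'_le (fun j => if r j = 0 then 1 else |r j| / (|s j| + 1))
        (Finset.mem_univ j)
      rw [if_neg hrj] at h0
      exact h0
    have h2 : t < |r j| / (|s j| + 1) := lt_of_lt_of_le htε h1
    have h3 : t * (|s j| + 1) < |r j| := (lt_div_iff₀ (by positivity)).mp h2
    nlinarith [abs_nonneg (s j)]
  rw [hf (x + t • v), hf (x - t • v), hf x]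
  simp only [expand₁, expand₂]
  have key : (∑ j, (b j : ℝ) * max 0 (r j + t * s j))
      + (∑ j, (b j : ℝ) * max 0 (r j - t * s j))
      - 2 * ∑ j, (b j : ℝ) * max 0 (r j)
      = ∑ j, (b j : ℝ) * (max 0 (r j + t * s j) + max 0 (r j - t * s j) - 2 * max 0 (r j)) := by
    rw [Finset.mul_sum, ← Finset.sum_add_distrib, ← Finset.sum_sub_distrib]
    exact Finset.sum_congr rfl fun j _ => by ring
  rw [key]
  rw [← Finset.sum_filter_add_sum_filter_not Finset.univ (fun j => a j = a i ∨ a j = -a i)]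
  have hS : ∀ j ∈ Finset.univ.filter (fun j => a j = a i ∨ a j = -a i),
      (b j : ℝ) * (max 0 (r j + t * s j) + max 0 (r j - t * s j) - 2 * max 0 (r j))
        = (b j : ℝ) * (t * |s i|) := by
    intro j hj
    rw [Finset.mem_filter] at hj
    have h0 := hrS j hj.2
    have h1 := hsS j hj.2
    rw [h0]
    have : max 0 (0 + t * s j) + max 0 (0 - t * s j) - 2 * max 0 (0:ℝ) = |t * s j| := by
      rw [zero_add, zero_sub, max_self, mul_zero, sub_zero, max_zero_add_max_zero_neg]
    rw [this, abs_mul, abs_of_pos ht, h1]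
  have hSc : ∀ j ∈ Finset.univ.filter (fun j => ¬(a j = a i ∨ a j = -a i)),
      (b j : ℝ) * (max 0 (r j + t * s j) + max 0 (r j - t * s j) - 2 * max 0 (r j)) = 0 := by
    intro j hj
    rw [Finset.mem_filter] at hj
    push_neg at hj
    have hrj : r j ≠ 0 := hx2 j hj.2.1 hj.2.2
    have hb := hbound j hrj
    have habs : |t * s j| < |r j| := by rw [abs_mul, abs_of_pos ht]; exact hb
    rcases hrj.lt_or_gt with hneg | hpos
    · have h1 : r j + t * s j ≤ 0 := by
        have := neg_abs_le (t * s j); have := abs_of_neg hneg; linarith [abs_lt.mp habs]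
      have h2 : r j - t * s j ≤ 0 := by
        have := abs_of_neg hneg; linarith [abs_lt.mp habs, le_abs_self (t * s j)]
      rw [max_eq_left h1, max_eq_left h2, max_eq_left hneg.le]
      ring
    · have h1 : 0 ≤ r j + t * s j := by
        have := abs_of_pos hpos; linarith [abs_lt.mp habs]
      have h2 : 0 ≤ r j - t * s j := by
        have := abs_of_pos hpos; linarith [abs_lt.mp habs, le_abs_self (t * s j)]
      rw [max_eq_right h1, max_eq_right h2, max_eq_right hpos.le]
      ring
  rw [Finset.sum_congr rfl hS, Finset.sum_congr rfl hSc, Finset.sum_const_zero, add_zero,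
    ← Finset.sum_mul, hc]
  push_cast
  ring
end

section
/- Let n ≥ 1, p ≥ 1, let a_1,…,a_p ∈ ℤ^n be primitive vectors that are pairwise non-parallel (a_i is not a real scalar multiple of a_j for i ≠ j), and let f : ℝ^n → ℝ be continuous and such that on each closed chamber of the central hyperplane arrangement ∪_{i=1}^p {y : ⟨a_i,y⟩ = 0} (the closure of each connected component of the complement), f agrees with a linear function x ↦ ⟨c,x⟩ with c ∈ ℚ^n. Suppose that for every i ∈ {1,…,p} there exists t_i ∈ ℚ such that for every x ∈ ℝ^n with ⟨a_i,x⟩ = 0 and ⟨a_j,x⟩ ≠ 0 for all j ≠ i, and every v ∈ ℝ^n, there exists ε > 0 with f(x+tv) + f(x−tv) − 2·f(x) = t_i·t·|⟨a_i,v⟩| for all 0 < t < ε. Then there exists c₀ ∈ ℚ^n such that f(x) = ⟨c₀,x⟩ + Σ_{i=1}^p t_i·max(0,⟨a_i,x⟩) for all x ∈ ℝ^n; in particular f ∈ ReLU₀^ℚ(n,1). -/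
/-!
Let `g = f - ∑ i, t i * max 0 ⟨a i, ·⟩`. Each ReLU term has the same second-difference jump
across its own wall as `f` and none elsewhere, so `g` has vanishing local symmetric second
differences at every point lying on at most one wall. Near a point `x₀` of an open chamber, `g` is
linear with rational coefficients `c₀`. For generic `x₁` the line through `x₀` and `x₁` meets the
walls one at a time (this is where non-parallelism enters), and a continuous function of one real
variable with vanishing local second differences that vanishes near `0` vanishes identically. So
`g = ⟨c₀, ·⟩` on a dense set, hence everywhere.
-/

open Filter Topology Set

theorem dense_iInter_of_isOpen_of_finite {X ι : Type*} [TopologicalSpace X] [Finite ι]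
    {s : ι → Set X} (ho : ∀ i, IsOpen (s i)) (hd : ∀ i, Dense (s i)) : Dense (⋂ i, s i) := by
  classical
  cases nonempty_fintype ι
  suffices ∀ S : Finset ι, Dense (⋂ i ∈ S, s i) by simpa using this Finset.univ
  intro S
  induction S using Finset.induction_on with
  | empty => simp
  | insert i S _ ih =>
    rw [Finset.set_biInter_insert]
    exact (hd i).inter_of_isOpen_left ih (ho i)

theorem eventuallyEq_of_eqOn_closure_connectedComponentIn {X Y : Type*} [TopologicalSpace X]
    [LocallyConnectedSpace X] {U : Set X} (hU : IsOpen U) {x : X} (hx : x ∈ U) {f g : X → Y}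
    (h : EqOn f g (closure (connectedComponentIn U x))) : f =ᶠ[𝓝 x] g :=
  eventually_of_mem (hU.connectedComponentIn.mem_nhds (mem_connectedComponentIn hx))
    fun _ hy => h (subset_closure hy)

section OneVariable

variable {ψ : ℝ → ℝ}

theorem eqOn_Ici_zero_of_eventually_midpoint (hψ : Continuous ψ)
    (hmid : ∀ s, ∀ᶠ τ in 𝓝[>] 0, ψ (s + τ) + ψ (s - τ) = 2 * ψ s) (h₀ : ψ =ᶠ[𝓝 0] 0) :
    EqOn ψ 0 (Ici 0) := by
  by_contra hne
  obtain ⟨δ, hδ, hψδ⟩ := Metric.eventually_nhds_iff_ball.1 h₀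
  set B := Ici 0 ∩ {s | ψ s ≠ 0}
  have hB : B.Nonempty := by simpa [EqOn, B, Set.Nonempty] using hne
  have hBdd : BddBelow B := ⟨0, fun _ hb => hb.1⟩
  set S := sInf B
  have hzero : EqOn ψ 0 (Ico 0 S) := fun u hu => by_contra fun h =>
    notMem_of_lt_csInf hu.2 hBdd ⟨hu.1, h⟩
  have hδS : δ ≤ S := le_csInf hB fun b hb => not_lt.1 fun hbδ =>
    hb.2 (hψδ b (by rw [Metric.mem_ball, Real.dist_0_eq_abs, abs_of_nonneg hb.1]; exact hbδ))
  have hS : 0 < S := hδ.trans_le hδS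
  have hψS : ψ S = 0 := by
    have : S ∈ closure (Ico 0 S) := by rw [closure_Ico hS.ne]; exact ⟨hS.le, le_rfl⟩
    exact (isClosed_eq hψ continuous_const).closure_subset_iff.2 hzero this
  obtain ⟨ε, hε, hψε⟩ := (nhdsGT_basis 0).eventually_iff.1 (hmid S)
  -- the midpoint identity at `S` reflects the zeros on `[0, S)` to the right of `S`
  have : S + min ε S ≤ S := le_csInf hB fun b hb => not_lt.1 fun hbS => by
    rcases (csInf_le hBdd hb : S ≤ b).eq_or_lt with rfl | hSb
    · exact hb.2 hψS
    · have h := hψε (x := b - S) ⟨sub_pos.2 hSb, by linarith [min_le_left ε S]⟩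
      rw [add_sub_cancel, hψS,
        hzero (x := S - (b - S)) ⟨by linarith [min_le_right ε S], by linarith⟩] at h
      exact hb.2 (by simpa using h)
  linarith [lt_min hε hS]

theorem eq_zero_of_eventually_midpoint (hψ : Continuous ψ)
    (hmid : ∀ s, ∀ᶠ τ in 𝓝[>] 0, ψ (s + τ) + ψ (s - τ) = 2 * ψ s) (h₀ : ψ =ᶠ[𝓝 0] 0) :
    ψ = 0 := by
  have hneg : EqOn (ψ ∘ Neg.neg) 0 (Ici 0) := by
    refine eqOn_Ici_zero_of_eventually_midpoint (hψ.comp continuous_neg) (fun s => ?_) ?_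
    · filter_upwards [hmid (-s)] with τ hτ
      rw [Function.comp_apply, Function.comp_apply, Function.comp_apply, neg_add', neg_sub',
        sub_neg_eq_add]
      linarith
    · simpa using h₀.comp_tendsto (continuous_neg.tendsto' 0 0 neg_zero)
  funext s
  rcases le_total 0 s with hs | hs
  · exact eqOn_Ici_zero_of_eventually_midpoint hψ hmid h₀ hs
  · simpa using hneg (x := -s) (neg_nonneg.2 hs)

end OneVariable

section SecondDiff

variable {E : Type*} [AddCommGroup E] [Module ℝ E]

def secondDiff (g : E → ℝ) (x v : E) (τ : ℝ) : ℝ :=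
  g (x + τ • v) + g (x - τ • v) - 2 * g x

variable {x v : E} {τ : ℝ}

theorem secondDiff_sub (g h : E → ℝ) :
    secondDiff (fun y => g y - h y) x v τ = secondDiff g x v τ - secondDiff h x v τ := by
  simp only [secondDiff]; ring

theorem secondDiff_sum {ι : Type*} (s : Finset ι) (g : ι → E → ℝ) :
    secondDiff (fun y => ∑ i ∈ s, g i y) x v τ = ∑ i ∈ s, secondDiff (g i) x v τ := by
  simp only [secondDiff, Finset.sum_add_distrib, Finset.sum_sub_distrib, Finset.mul_sum]

theorem secondDiff_const_mul (c : ℝ) (g : E → ℝ) :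
    secondDiff (fun y => c * g y) x v τ = c * secondDiff g x v τ := by
  simp only [secondDiff]; ring

variable {F : Type*} [FunLike F E ℝ] [LinearMapClass F ℝ E ℝ]

theorem secondDiff_linearMap (L : F) : secondDiff L x v τ = 0 := by
  simp only [secondDiff, map_add, map_sub, map_smul]; ring

theorem secondDiff_relu_of_eq_zero (L : F) (hx : L x = 0) (hτ : 0 ≤ τ) :
    secondDiff (fun y => max 0 (L y)) x v τ = τ * |L v| := by
  simp only [secondDiff, map_add, map_sub, map_smul, hx, smul_eq_mul, zero_add, zero_sub,
    max_self, mul_zero, sub_zero]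
  rw [max_comm 0, max_comm 0, max_zero_add_max_neg_zero_eq_abs_self, abs_mul, abs_of_nonneg hτ]

variable [TopologicalSpace E]

theorem relu_eventuallyEq (ℓ : E →L[ℝ] ℝ) (hx : ℓ x ≠ 0) :
    (fun y => max 0 (ℓ y)) =ᶠ[𝓝 x] ⇑(if 0 < ℓ x then ℓ else 0) := by
  rcases hx.lt_or_gt with hneg | hpos
  · filter_upwards [ℓ.continuous.continuousAt.eventually_lt continuousAt_const hneg] with y hy
    simp [hneg.not_gt, hy.le]
  · filter_upwards [continuousAt_const.eventually_lt ℓ.continuous.continuousAt hpos] with y hy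
    simp [hpos, hy.le]

variable [ContinuousAdd E] [ContinuousSMul ℝ E]

theorem tendsto_add_smul (x v : E) : Tendsto (fun τ : ℝ => x + τ • v) (𝓝 0) (𝓝 x) :=
  (continuous_const.add (continuous_id.smul continuous_const)).tendsto' 0 x (by simp)

theorem eventually_secondDiff_eq_zero_of_eventuallyEq {g : E → ℝ} {L : F}
    (hg : g =ᶠ[𝓝 x] L) : ∀ᶠ τ in 𝓝 0, secondDiff g x v τ = 0 := by
  have h₁ := (tendsto_add_smul x v).eventually hg
  have h₂ : ∀ᶠ τ : ℝ in 𝓝 0, g (x - τ • v) = L (x - τ • v) := by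
    simpa [sub_eq_add_neg] using (tendsto_add_smul x (-v)).eventually hg
  filter_upwards [h₁, h₂] with τ h₁ h₂
  rw [secondDiff, h₁, h₂, hg.eq_of_nhds]
  exact secondDiff_linearMap L

theorem eventually_secondDiff_relu (ℓ : E →L[ℝ] ℝ) (x v : E) :
    ∀ᶠ τ in 𝓝[>] 0,
      secondDiff (fun y => max 0 (ℓ y)) x v τ = if ℓ x = 0 then τ * |ℓ v| else 0 := by
  by_cases hx : ℓ x = 0
  · filter_upwards [self_mem_nhdsWithin] with τ hτ
    rw [if_pos hx, secondDiff_relu_of_eq_zero ℓ hx (le_of_lt hτ)]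
  · simpa [hx] using (eventually_secondDiff_eq_zero_of_eventuallyEq
      (relu_eventuallyEq ℓ hx)).filter_mono nhdsWithin_le_nhds

theorem apply_add_eq_zero_of_secondDiff_eq_zero {g : E → ℝ} (hg : Continuous g) {x₀ v : E}
    (h₀ : g =ᶠ[𝓝 x₀] 0) (hmid : ∀ s : ℝ, ∀ᶠ τ in 𝓝[>] 0, secondDiff g (x₀ + s • v) v τ = 0) :
    g (x₀ + v) = 0 := by
  have hline : Continuous fun s : ℝ => x₀ + s • v :=
    continuous_const.add (continuous_id.smul continuous_const)
  have := eq_zero_of_eventually_midpoint (ψ := fun s => g (x₀ + s • v)) (hg.comp hline)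
    (fun s => ?_) ?_
  · simpa using congrFun this 1
  · filter_upwards [hmid s] with τ hτ
    rw [secondDiff, sub_eq_zero] at hτ
    simpa [add_smul, sub_smul, add_assoc, add_sub_assoc] using hτ
  · exact h₀.comp_tendsto (tendsto_add_smul x₀ v)

end SecondDiff

section Arrangement

variable {E : Type*} [AddCommGroup E] [Module ℝ E] [TopologicalSpace E]

theorem apply_smul_sub_apply_smul_ne_zero {ℓ₁ ℓ₂ : E →L[ℝ] ℝ} {x₀ : E} (hx₀ : ℓ₂ x₀ ≠ 0)
    (hpar : ∀ c : ℝ, ℓ₁ ≠ c • ℓ₂) : ℓ₁ x₀ • ℓ₂ - ℓ₂ x₀ • ℓ₁ ≠ 0 := by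
  intro h
  apply hpar (ℓ₁ x₀ / ℓ₂ x₀)
  rw [sub_eq_zero] at h
  rw [div_eq_inv_mul, mul_smul, h, inv_smul_smul₀ hx₀]

theorem apply_ne_zero_of_apply_eq_zero_on_line {ℓ₁ ℓ₂ : E →L[ℝ] ℝ} {x₀ x₁ : E}
    (h : ℓ₁ x₀ * ℓ₂ x₁ - ℓ₂ x₀ * ℓ₁ x₁ ≠ 0) (s : ℝ) (h₁ : ℓ₁ (x₀ + s • (x₁ - x₀)) = 0) :
    ℓ₂ (x₀ + s • (x₁ - x₀)) ≠ 0 := by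
  intro h₂
  simp only [map_add, map_smul, map_sub, smul_eq_mul] at h₁ h₂
  exact h (by linear_combination (ℓ₂ x₁ - ℓ₂ x₀) * h₁ - (ℓ₁ x₁ - ℓ₁ x₀) * h₂)

variable [ContinuousAdd E] [ContinuousSMul ℝ E]

theorem dense_setOf_apply_ne_zero {ℓ : E →L[ℝ] ℝ} (hℓ : ℓ ≠ 0) : Dense {x | ℓ x ≠ 0} := by
  have : interior (LinearMap.ker (ℓ : E →ₗ[ℝ] ℝ) : Set E) = ∅ := by
    by_contra h
    refine hℓ (ContinuousLinearMap.coe_injective (LinearMap.ker_eq_top.1 ?_))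
    exact Submodule.eq_top_of_nonempty_interior' _ (nonempty_iff_ne_empty.2 h)
  exact interior_eq_empty_iff_dense_compl.1 this

theorem exists_forall_apply_ne_zero {ι : Type*} [Finite ι] {ℓ : ι → E →L[ℝ] ℝ}
    (hℓ : ∀ i, ℓ i ≠ 0) : ∃ x, ∀ i, ℓ i x ≠ 0 := by
  obtain ⟨x, hx⟩ := (dense_iInter_of_isOpen_of_finite
    (fun i => isOpen_ne_fun (ℓ i).continuous continuous_const)
    fun i => dense_setOf_apply_ne_zero (hℓ i)).nonempty
  exact ⟨x, by simpa using hx⟩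

variable {ι : Type*} [Fintype ι] (ℓ : ι → E →L[ℝ] ℝ)

theorem dense_setOf_line_meets_walls_separately {x₀ : E} (hx₀ : ∀ i, ℓ i x₀ ≠ 0)
    (hpar : ∀ i j, i ≠ j → ∀ c : ℝ, ℓ i ≠ c • ℓ j) :
    Dense {x | ∀ i j, i ≠ j → ℓ i x₀ * ℓ j x - ℓ j x₀ * ℓ i x ≠ 0} := by
  have : {x | ∀ i j, i ≠ j → ℓ i x₀ * ℓ j x - ℓ j x₀ * ℓ i x ≠ 0} =
      ⋂ q : {q : ι × ι // q.1 ≠ q.2},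
        {x | (ℓ q.1.1 x₀ • ℓ q.1.2 - ℓ q.1.2 x₀ • ℓ q.1.1) x ≠ 0} := by
    ext x; simp
  rw [this]
  exact dense_iInter_of_isOpen_of_finite
    (fun q => isOpen_ne_fun (ContinuousLinearMap.continuous _) continuous_const)
    fun q => dense_setOf_apply_ne_zero
      (apply_smul_sub_apply_smul_ne_zero (hx₀ _) (hpar _ _ q.2))

variable (t : ι → ℝ)

theorem eventually_secondDiff_sum_relu (x v : E) :
    ∀ᶠ τ in 𝓝[>] 0, secondDiff (fun y => ∑ i, t i * max 0 (ℓ i y)) x v τ =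
      ∑ i, if ℓ i x = 0 then t i * τ * |ℓ i v| else 0 := by
  filter_upwards [eventually_all.2 fun i => eventually_secondDiff_relu (ℓ i) x v] with τ hτ
  rw [secondDiff_sum Finset.univ fun i y => t i * max 0 (ℓ i y)]
  refine Finset.sum_congr rfl fun i _ => ?_
  rw [secondDiff_const_mul (t i) fun y => max 0 (ℓ i y), hτ i]
  split_ifs <;> ring

variable {ℓ t} {f : E → ℝ}

theorem eventually_secondDiff_eq_sum_of_subsingleton_walls
    (hchamber : ∀ x, (∀ i, ℓ i x ≠ 0) → ∃ L : E →L[ℝ] ℝ, f =ᶠ[𝓝 x] L)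
    (hwall : ∀ i x, ℓ i x = 0 → (∀ j, j ≠ i → ℓ j x ≠ 0) →
      ∀ v, ∀ᶠ τ in 𝓝[>] 0, secondDiff f x v τ = t i * τ * |ℓ i v|) {x : E}
    (hx : ∀ i j, ℓ i x = 0 → ℓ j x = 0 → i = j) (v : E) :
    ∀ᶠ τ in 𝓝[>] 0, secondDiff f x v τ = ∑ i, if ℓ i x = 0 then t i * τ * |ℓ i v| else 0 := by
  by_cases hwall' : ∃ i, ℓ i x = 0
  · obtain ⟨i, hi⟩ := hwall'
    filter_upwards [hwall i x hi (fun j hj hj0 => hj (hx j i hj0 hi)) v] with τ hτ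
    rw [hτ, Finset.sum_eq_single i (fun j _ hj => if_neg fun hj0 => hj (hx j i hj0 hi))
      (by simp), if_pos hi]
  · obtain ⟨L, hL⟩ := hchamber x (not_exists.1 hwall')
    filter_upwards [(eventually_secondDiff_eq_zero_of_eventuallyEq (v := v) hL).filter_mono
      nhdsWithin_le_nhds] with τ hτ
    simp [hτ, not_exists.1 hwall']

theorem eq_add_sum_relu_of_secondDiff
    (hchamber : ∀ x, (∀ i, ℓ i x ≠ 0) → ∃ L : E →L[ℝ] ℝ, f =ᶠ[𝓝 x] L)
    (hwall : ∀ i x, ℓ i x = 0 → (∀ j, j ≠ i → ℓ j x ≠ 0) →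
      ∀ v, ∀ᶠ τ in 𝓝[>] 0, secondDiff f x v τ = t i * τ * |ℓ i v|) (hf : Continuous f)
    (hpar : ∀ i j, i ≠ j → ∀ c : ℝ, ℓ i ≠ c • ℓ j) {x₀ : E} (hx₀ : ∀ i, ℓ i x₀ ≠ 0)
    (L₀ : E →L[ℝ] ℝ) (h₀ : (fun y => f y - ∑ i, t i * max 0 (ℓ i y)) =ᶠ[𝓝 x₀] L₀) (x : E) :
    f x = L₀ x + ∑ i, t i * max 0 (ℓ i x) := by
  set g : E → ℝ := fun y => f y - ∑ i, t i * max 0 (ℓ i y) - L₀ y with hg_def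
  have hg : Continuous g := by fun_prop
  have hg₀ : g =ᶠ[𝓝 x₀] 0 := h₀.mono fun y hy => sub_eq_zero.2 hy
  have hmid : ∀ x v, (∀ i j, ℓ i x = 0 → ℓ j x = 0 → i = j) →
      ∀ᶠ τ in 𝓝[>] 0, secondDiff g x v τ = 0 := fun x v hx => by
    filter_upwards [eventually_secondDiff_eq_sum_of_subsingleton_walls hchamber hwall hx v,
      eventually_secondDiff_sum_relu ℓ t x v] with τ h₁ h₂
    rw [secondDiff_sub, secondDiff_sub, h₁, h₂, secondDiff_linearMap, sub_self, sub_zero]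
  have hg0 : g = 0 := hg.ext_on (dense_setOf_line_meets_walls_separately ℓ hx₀ hpar)
    continuous_const fun x₁ hx₁ => by
      simpa using apply_add_eq_zero_of_secondDiff_eq_zero hg hg₀ (v := x₁ - x₀) fun s =>
        hmid _ _ fun i j hi hj => by_contra fun hij =>
          apply_ne_zero_of_apply_eq_zero_on_line (hx₁ i j hij) s hi hj
  have hx := congrFun hg0 x
  simp only [hg_def, Pi.zero_apply] at hx
  linarith

end Arrangement

section DotProduct

variable {m : Type*} [Fintype m]

def dotProductCLM (w : m → ℝ) : (m → ℝ) →L[ℝ] ℝ :=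
  ∑ k, w k • ContinuousLinearMap.proj k

@[simp]
theorem dotProductCLM_apply (w y : m → ℝ) : dotProductCLM w y = ∑ k, w k * y k := by
  simp [dotProductCLM]

theorem exists_rat_eventuallyEq_sub_sum_relu {ι : Type*} [Fintype ι] (a : ι → m → ℚ)
    (t : ι → ℚ) {f : (m → ℝ) → ℝ} {x₀ : m → ℝ}
    (hx₀ : ∀ i, dotProductCLM (fun k => (a i k : ℝ)) x₀ ≠ 0) {c : m → ℚ}
    (hf : f =ᶠ[𝓝 x₀] dotProductCLM fun k => (c k : ℝ)) :
    ∃ c₀ : m → ℚ,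
      (fun y => f y - ∑ i, (t i : ℝ) * max 0 (dotProductCLM (fun k => (a i k : ℝ)) y))
        =ᶠ[𝓝 x₀] dotProductCLM fun k => (c₀ k : ℝ) := by
  classical
  set S : Finset ι := {i | 0 < dotProductCLM (fun k => (a i k : ℝ)) x₀}
  refine ⟨c - ∑ i ∈ S, t i • a i, ?_⟩
  filter_upwards [hf, eventually_all.2 fun i => relu_eventuallyEq _ (hx₀ i)] with y hfy hrelu
  simp only [hfy, hrelu, apply_ite (fun L : (m → ℝ) →L[ℝ] ℝ => L y)]
  simp [Finset.sum_ite, S, sub_mul, Finset.sum_mul, Finset.mul_sum, Finset.sum_sub_distrib,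
    mul_assoc]
  rw [Finset.sum_comm]

end DotProduct

theorem stmt7_general (n p : ℕ)
    (a : Fin p → Fin n → ℤ) (ha : ∀ i, Primitive (a i))
    (hpar : ∀ i j, i ≠ j → ∀ c : ℝ,
      (fun k => (a i k : ℝ)) ≠ c • fun k => (a j k : ℝ))
    (f : (Fin n → ℝ) → ℝ) (hcont : Continuous f)
    (hpl : ∀ x₀ ∈ {y : Fin n → ℝ | ∀ i, (∑ k, (a i k : ℝ) * y k) ≠ 0},
      ∃ c : Fin n → ℚ, ∀ x ∈ closure (connectedComponentIn
          {y : Fin n → ℝ | ∀ i, (∑ k, (a i k : ℝ) * y k) ≠ 0} x₀),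
        f x = ∑ j, (c j : ℝ) * x j)
    (t : Fin p → ℚ)
    (ht : ∀ i, ∀ x : Fin n → ℝ, (∑ k, (a i k : ℝ) * x k) = 0 →
      (∀ j, j ≠ i → (∑ k, (a j k : ℝ) * x k) ≠ 0) →
      ∀ v : Fin n → ℝ, ∃ ε > 0, ∀ s : ℝ, 0 < s → s < ε →
        f (x + s • v) + f (x - s • v) - 2 * f x
          = (t i : ℝ) * s * |∑ k, (a i k : ℝ) * v k|) :
    ∃ c₀ : Fin n → ℚ, ∀ x : Fin n → ℝ,
      f x = (∑ j, (c₀ j : ℝ) * x j)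
        + ∑ i, (t i : ℝ) * max 0 (∑ k, (a i k : ℝ) * x k) := by
  simp only [← dotProductCLM_apply] at hpl ht
  set ℓ : Fin p → (Fin n → ℝ) →L[ℝ] ℝ := fun i => dotProductCLM fun k => (a i k : ℝ)
  have hℓ : ∀ i, ℓ i ≠ 0 := fun i h => (ha i).1 <| funext fun k => by
    simpa [ℓ, Pi.single_apply] using congrArg (· (Pi.single k 1)) h
  have hℓpar : ∀ i j, i ≠ j → ∀ c : ℝ, ℓ i ≠ c • ℓ j := fun i j hij c h =>
    hpar i j hij c <| funext fun k => by
      simpa [ℓ, Pi.single_apply] using congrArg (· (Pi.single k 1)) h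
  have hU : IsOpen {y | ∀ i, ℓ i y ≠ 0} := by
    simpa only [Set.ofPred_forall] using
      isOpen_iInter_of_finite fun i => isOpen_ne_fun (ℓ i).continuous continuous_const
  have hchamber : ∀ x, (∀ i, ℓ i x ≠ 0) → ∃ c : Fin n → ℚ,
      f =ᶠ[𝓝 x] dotProductCLM fun k => (c k : ℝ) := fun x hx =>
    (hpl x hx).imp fun _ hc => eventuallyEq_of_eqOn_closure_connectedComponentIn hU hx hc
  have hwall : ∀ i x, ℓ i x = 0 → (∀ j, j ≠ i → ℓ j x ≠ 0) →
      ∀ v, ∀ᶠ τ in 𝓝[>] 0, secondDiff f x v τ = t i * τ * |ℓ i v| := fun i x hx hj v => by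
    obtain ⟨ε, hε, hf⟩ := ht i x hx hj v
    exact (nhdsGT_basis 0).eventually_iff.2 ⟨ε, hε, fun τ hτ => hf τ hτ.1 hτ.2⟩
  obtain ⟨x₀, hx₀⟩ := exists_forall_apply_ne_zero hℓ
  obtain ⟨c, hc⟩ := hchamber x₀ hx₀
  obtain ⟨c₀, h₀⟩ := exists_rat_eventuallyEq_sub_sum_relu (fun i k => (a i k : ℚ)) t
    (by simpa [ℓ] using hx₀) hc
  refine ⟨c₀, fun x => ?_⟩
  simpa [ℓ] using eq_add_sum_relu_of_secondDiff (ℓ := ℓ) (t := fun i => (t i : ℝ))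
    (fun x hx => (hchamber x hx).elim fun _ hc => ⟨_, hc⟩) hwall hcont hℓpar hx₀
    (dotProductCLM fun k => (c₀ k : ℝ)) (by simpa [ℓ] using h₀) x

/-- Sufficiency: if `f : ℝ^n → ℝ` is continuous, linear with rational slope
vector on (the closure of) each chamber of the central arrangement of the
pairwise non-parallel primitive hyperplane normals `a_1,…,a_p`, and the
second-difference jump of `f` across the hyperplane `⟨a_i,·⟩ = 0` equals
`t_i · t · |⟨a_i,v⟩|` at every wall point, for each `i`, then
`f(x) = ⟨c₀,x⟩ + Σ_i t_i · max(0,⟨a_i,x⟩)` for some `c₀ ∈ ℚ^n`; in particular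
`f ∈ ReLU₀^ℚ(n,1)`. -/
theorem stmt7 (n p : ℕ) (hn : 1 ≤ n) (hp : 1 ≤ p)
    (a : Fin p → Fin n → ℤ) (ha : ∀ i, Primitive (a i))
    (hpar : ∀ i j, i ≠ j → ∀ c : ℝ,
      (fun k => (a i k : ℝ)) ≠ c • fun k => (a j k : ℝ))
    (f : (Fin n → ℝ) → ℝ) (hcont : Continuous f)
    (hpl : ∀ x₀ ∈ {y : Fin n → ℝ | ∀ i, (∑ k, (a i k : ℝ) * y k) ≠ 0},
      ∃ c : Fin n → ℚ, ∀ x ∈ closure (connectedComponentIn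
          {y : Fin n → ℝ | ∀ i, (∑ k, (a i k : ℝ) * y k) ≠ 0} x₀),
        f x = ∑ j, (c j : ℝ) * x j)
    (t : Fin p → ℚ)
    (ht : ∀ i, ∀ x : Fin n → ℝ, (∑ k, (a i k : ℝ) * x k) = 0 →
      (∀ j, j ≠ i → (∑ k, (a j k : ℝ) * x k) ≠ 0) →
      ∀ v : Fin n → ℝ, ∃ ε > 0, ∀ s : ℝ, 0 < s → s < ε →
        f (x + s • v) + f (x - s • v) - 2 * f x
          = (t i : ℝ) * s * |∑ k, (a i k : ℝ) * v k|) :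
    ∃ c₀ : Fin n → ℚ, ∀ x : Fin n → ℝ,
      f x = (∑ j, (c₀ j : ℝ) * x j)
        + ∑ i, (t i : ℝ) * max 0 (∑ k, (a i k : ℝ) * x k) :=
  stmt7_general n p a ha hpar f hcont hpl t ht
end

section
/- Define f : ℝ² → ℝ to be the continuous, finitely piecewise linear function given by: f(x,y) = x + 2y if y ≥ |x|; f(x,y) = 3y if x ≥ 0 and 0 ≤ y ≤ x; f(x,y) = −4y if x ≥ 0 and −x ≤ y ≤ 0; f(x,y) = 2x − 2y if y ≤ −|x|; f(x,y) = y if x ≤ 0 and 0 ≤ y ≤ −x; and f(x,y) = 0 if x ≤ 0 and x ≤ y ≤ 0. Then f ∉ ReLU₀^ℚ(2,1); that is, there do not exist p ∈ ℕ, b_1,…,b_p ∈ ℚ and a_1,…,a_p ∈ ℚ² such that f(x) = Σ_{i=1}^p b_i·max(0,⟨a_i,x⟩) for all x ∈ ℝ². (This function has a symmetric bent hyperplane arrangement — the lines y = 0, y = x, y = −x — yet is not realizable by any unbiased shallow ReLU neural network with rational weights.) -/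
/-- The continuous piecewise-linear function on `ℝ²` given by `x+2y` on
`{y ≥ |x|}`, `3y` on `{x ≥ 0, 0 ≤ y ≤ x}`, `-4y` on `{x ≥ 0, -x ≤ y ≤ 0}`,
`2x-2y` on `{y ≤ -|x|}`, `y` on `{x ≤ 0, 0 ≤ y ≤ -x}` and `0` on
`{x ≤ 0, x ≤ y ≤ 0}` is not realizable by any unbiased shallow ReLU neural
network with rational weights, despite its symmetric bent hyperplane
arrangement. -/
theorem stmt11 (f : (Fin 2 → ℝ) → ℝ)
    (h1 : ∀ q : Fin 2 → ℝ, |q 0| ≤ q 1 → f q = q 0 + 2 * q 1)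
    (h2 : ∀ q : Fin 2 → ℝ, 0 ≤ q 0 → 0 ≤ q 1 → q 1 ≤ q 0 → f q = 3 * q 1)
    (h3 : ∀ q : Fin 2 → ℝ, 0 ≤ q 0 → -q 0 ≤ q 1 → q 1 ≤ 0 → f q = -4 * q 1)
    (h4 : ∀ q : Fin 2 → ℝ, q 1 ≤ -|q 0| → f q = 2 * q 0 - 2 * q 1)
    (h5 : ∀ q : Fin 2 → ℝ, q 0 ≤ 0 → 0 ≤ q 1 → q 1 ≤ -q 0 → f q = q 1)
    (h6 : ∀ q : Fin 2 → ℝ, q 0 ≤ 0 → q 0 ≤ q 1 → q 1 ≤ 0 → f q = 0) :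
    ¬ ∃ (p : ℕ) (b : Fin p → ℚ) (a : Fin p → Fin 2 → ℚ),
      ∀ x : Fin 2 → ℝ,
        f x = ∑ i, (b i : ℝ) * max 0 (∑ j, (a i j : ℝ) * x j) := by
  rintro ⟨p, b, a, hrep⟩
  -- The odd part of the network is linear: f x - f (-x) = ∑ bᵢ ⟨aᵢ, x⟩
  have key : ∀ x : Fin 2 → ℝ, f x - f (fun i => -x i)
      = ∑ i, (b i : ℝ) * (∑ j, (a i j : ℝ) * x j) := by
    intro x
    rw [hrep x, hrep (fun i => -x i), ← Finset.sum_sub_distrib]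
    refine Finset.sum_congr rfl fun i _ => ?_
    have hneg : (∑ j, (a i j : ℝ) * (-x j)) = -(∑ j, (a i j : ℝ) * x j) := by
      simp [mul_neg]
    rw [hneg]
    rcases le_total 0 (∑ j, (a i j : ℝ) * x j) with h | h
    · rw [max_eq_right h, max_eq_left (by linarith)]; ring
    · rw [max_eq_left h, max_eq_right (by linarith)]; ring
  have e11 := key ![1, 1]
  have e10 := key ![1, 0]
  have e01 := key ![0, 1]
  -- evaluate f at the six points
  have f11 : f ![1, 1] = 3 := by
    have := h2 ![1, 1] (by norm_num) (by norm_num) (by norm_num); simpa using this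
  have fm11 : f (fun i => -(![1, 1] : Fin 2 → ℝ) i) = 0 := by
    have := h4 (fun i => -(![1, 1] : Fin 2 → ℝ) i) (by norm_num)
    simpa using this
  have f10 : f ![1, 0] = 0 := by
    have := h2 ![1, 0] (by norm_num) (by norm_num) (by norm_num); simpa using this
  have fm10 : f (fun i => -(![1, 0] : Fin 2 → ℝ) i) = 0 := by
    have := h6 (fun i => -(![1, 0] : Fin 2 → ℝ) i) (by norm_num) (by norm_num)
      (by norm_num)
    simpa using this
  have f01 : f ![0, 1] = 2 := by
    have := h1 ![0, 1] (by norm_num); simpa using this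
  have fm01 : f (fun i => -(![0, 1] : Fin 2 → ℝ) i) = 2 := by
    have := h4 (fun i => -(![0, 1] : Fin 2 → ℝ) i) (by norm_num)
    simpa using this
  rw [f11, fm11] at e11
  rw [f10, fm10] at e10
  rw [f01, fm01] at e01
  -- additivity of the linear part
  have hadd : (∑ i, (b i : ℝ) * (∑ j, (a i j : ℝ) * (![1, 1] : Fin 2 → ℝ) j))
      = (∑ i, (b i : ℝ) * (∑ j, (a i j : ℝ) * (![1, 0] : Fin 2 → ℝ) j))
      + (∑ i, (b i : ℝ) * (∑ j, (a i j : ℝ) * (![0, 1] : Fin 2 → ℝ) j)) := by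
    rw [← Finset.sum_add_distrib]
    refine Finset.sum_congr rfl fun i _ => ?_
    simp [Fin.sum_univ_two]
    ring
  rw [← e11, ← e10, ← e01] at hadd
  norm_num at hadd
end
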